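/- Let P = (S, 𝓛) be a thick nondegenerate polar space of rank at least 3 and let W be a proper subspace of P that is contained in some hyperplane of P but is not itself a hyperplane. If M, N are nonparallel affine lines of D(P, W) with [M] ≡ [N], then the points M^∞ and N^∞ are collinear in P. -/

import Mathlib

namespace PolarComp

variable {S : Type*}

/-- A partial linear space: every line has at least two points, and two
distinct lines share at most one point. -/
def IsPLS (𝓛 : Set (Set S)) : Prop :=
  (∀ l ∈ 𝓛, ∃ a b : S, a ≠ b ∧ a ∈ l ∧ b ∈ l) ∧
  (∀ l ∈ 𝓛, ∀ m ∈ 𝓛, l ≠ m → ∀ a b : S, a ∈ l ∩ m → b ∈ l ∩ m → a = b)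

/-- Thick: every line has at least three points. -/
def Thick (𝓛 : Set (Set S)) : Prop :=
  ∀ l ∈ 𝓛, ∃ a b c : S, a ≠ b ∧ a ≠ c ∧ b ≠ c ∧ a ∈ l ∧ b ∈ l ∧ c ∈ l

/-- Two points are collinear iff they lie on a common line (every point is
collinear with itself). -/
def Collin (𝓛 : Set (Set S)) (a b : S) : Prop :=
  a = b ∨ ∃ l ∈ 𝓛, a ∈ l ∧ b ∈ l

/-- Nondegenerate: no point is collinear with all other points. -/
def Nondegenerate (𝓛 : Set (Set S)) : Prop :=
  ∀ a : S, ∃ b : S, ¬ Collin 𝓛 a b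

/-- The one-or-all axiom: a point off a line is collinear with exactly one or
with all points of the line. -/
def OneOrAll (𝓛 : Set (Set S)) : Prop :=
  ∀ l ∈ 𝓛, ∀ a : S, a ∉ l →
    (∃! b, b ∈ l ∧ Collin 𝓛 a b) ∨ (∀ b ∈ l, Collin 𝓛 a b)

/-- A polar space is a partial linear space satisfying the one-or-all axiom. -/
def IsPolarSpace (𝓛 : Set (Set S)) : Prop := IsPLS 𝓛 ∧ OneOrAll 𝓛

/-- A subspace: contains every line meeting it in at least two points. -/
def IsSubspace (𝓛 : Set (Set S)) (X : Set S) : Prop :=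
  ∀ l ∈ 𝓛, (∃ a ∈ l ∩ X, ∃ b ∈ l ∩ X, a ≠ b) → l ⊆ X

/-- A hyperplane: a proper subspace meeting every line. -/
def IsHyperplane (𝓛 : Set (Set S)) (X : Set S) : Prop :=
  IsSubspace 𝓛 X ∧ X ≠ Set.univ ∧ ∀ l ∈ 𝓛, (l ∩ X).Nonempty

/-- A singular set: any two of its points are collinear. -/
def SingularSet (𝓛 : Set (Set S)) (X : Set S) : Prop :=
  ∀ a ∈ X, ∀ b ∈ X, Collin 𝓛 a b

/-- Rank at least `n`: there is a strictly increasing chain of `n` nonempty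
singular subspaces. -/
def RankAtLeast (𝓛 : Set (Set S)) (n : ℕ) : Prop :=
  ∃ X : Fin n → Set S, StrictMono X ∧
    ∀ i, (X i).Nonempty ∧ SingularSet 𝓛 (X i) ∧ IsSubspace 𝓛 (X i)

/-- `perp 𝓛 a` is the set of points collinear with `a`. -/
def perp (𝓛 : Set (Set S)) (a : S) : Set S := {b | Collin 𝓛 a b}

/-- The radical of `X`: `X ∩ X^⊥`. -/
def radSet (𝓛 : Set (Set S)) (X : Set S) : Set S :=
  X ∩ {a | ∀ b ∈ X, Collin 𝓛 a b}

/-- The lines of the complement `D(P, W)`. -/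
def compLines (𝓛 : Set (Set S)) (W : Set S) : Set (Set S) :=
  {K | ∃ k ∈ 𝓛, ¬ k ⊆ W ∧ K = k \ W}

/-- Two proper lines are parallel iff their closures meet in `W`. -/
def Parallel (𝓛 : Set (Set S)) (W : Set S) (K L : Set S) : Prop :=
  ∃ k ∈ 𝓛, ∃ l ∈ 𝓛, ¬ k ⊆ W ∧ ¬ l ⊆ W ∧ K = k \ W ∧ L = l \ W ∧
    (k ∩ l ∩ W).Nonempty

/-- A proper line is affine iff its closure meets `W`. -/
def IsAffineLine (𝓛 : Set (Set S)) (W : Set S) (K : Set S) : Prop :=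
  ∃ k ∈ 𝓛, ¬ k ⊆ W ∧ K = k \ W ∧ (k ∩ W).Nonempty

/-- `AtInfinity 𝓛 W K a` says that `a = K^∞`, i.e. `a` is a point of `K̄ ∩ W`. -/
def AtInfinity (𝓛 : Set (Set S)) (W : Set S) (K : Set S) (a : S) : Prop :=
  ∃ k ∈ 𝓛, ¬ k ⊆ W ∧ K = k \ W ∧ a ∈ k ∩ W

/-- A deep point of `W`: a point of `W` which is `L^∞` for no affine line `L`. -/
def IsDeepPoint (𝓛 : Set (Set S)) (W : Set S) (a : S) : Prop :=
  a ∈ W ∧ ∀ K : Set S, ¬ AtInfinity 𝓛 W K a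

/-- A plane: a minimal singular subspace containing a given line and a given
point not on that line. -/
def IsPlane (𝓛 : Set (Set S)) (X : Set S) : Prop :=
  ∃ l ∈ 𝓛, ∃ a : S, a ∉ l ∧ a ∈ X ∧ l ⊆ X ∧
    SingularSet 𝓛 X ∧ IsSubspace 𝓛 X ∧
    ∀ Y : Set S, SingularSet 𝓛 Y → IsSubspace 𝓛 Y → l ⊆ Y → a ∈ Y → Y ⊆ X → Y = X

/-- `Π^∞`: the points at infinity of a plane of the complement with closure `Pl`. -/
def planeInfinity (𝓛 : Set (Set S)) (W : Set S) (Pl : Set S) : Set S :=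
  {a | ∃ M : Set S, IsAffineLine 𝓛 W M ∧ M ⊆ Pl \ W ∧ AtInfinity 𝓛 W M a}

/-- A deep line: an improper line `L ⊆ W` which is `Π^∞` for no plane of the
complement. -/
def IsDeepLine (𝓛 : Set (Set S)) (W : Set S) (L : Set S) : Prop :=
  L ∈ 𝓛 ∧ L ⊆ W ∧
    ∀ Pl : Set S, IsPlane 𝓛 Pl → ¬ Pl ⊆ W → planeInfinity 𝓛 W Pl ≠ L

/-- The relation `∥*` on proper lines of the complement. -/
def ParStar (𝓛 : Set (Set S)) (W : Set S) (K₁ K₂ : Set S) : Prop :=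
  K₁ ∈ compLines 𝓛 W ∧ K₂ ∈ compLines 𝓛 W ∧ K₁ ∩ K₂ = ∅ ∧
    ∃ L₁ ∈ compLines 𝓛 W, ∃ L₂ ∈ compLines 𝓛 W, L₁ ≠ L₂ ∧
      (L₁ ∩ L₂).Nonempty ∧ (L₁ ∩ K₁).Nonempty ∧ (L₁ ∩ K₂).Nonempty ∧
      (L₂ ∩ K₁).Nonempty ∧ (L₂ ∩ K₂).Nonempty

/-- `∥ᵗ`: the transitive closure of `∥*`. -/
def ParT (𝓛 : Set (Set S)) (W : Set S) : Set S → Set S → Prop :=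
  Relation.TransGen (ParStar 𝓛 W)

/-- The anti-euclidean relation `~` on affine lines: `K₁ ~ K₂` iff no affine
line through a point of `K₁` is parallel to `K₂`. -/
def Tilde (𝓛 : Set (Set S)) (W : Set S) (K₁ K₂ : Set S) : Prop :=
  ∀ a ∈ K₁, ∀ M : Set S, IsAffineLine 𝓛 W M → a ∈ M → ¬ Parallel 𝓛 W M K₂

/-- `[K₁] ≡ [K₂]`: `M ~ N` and `N ~ M` for all `M ∥ K₁` and `N ∥ K₂`. -/
def EquivCls (𝓛 : Set (Set S)) (W : Set S) (K₁ K₂ : Set S) : Prop :=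
  ∀ M N : Set S, IsAffineLine 𝓛 W M → IsAffineLine 𝓛 W N →
    Parallel 𝓛 W M K₁ → Parallel 𝓛 W N K₂ → Tilde 𝓛 W M N ∧ Tilde 𝓛 W N M

/-- The parallel class of an affine line. -/
def parClass (𝓛 : Set (Set S)) (W : Set S) (L : Set S) : Set (Set S) :=
  {M | IsAffineLine 𝓛 W M ∧ Parallel 𝓛 W M L}

/-- The class of affine lines with point at infinity `w`. -/
def classAt (𝓛 : Set (Set S)) (W : Set S) (w : S) : Set (Set S) :=
  {L | IsAffineLine 𝓛 W L ∧ AtInfinity 𝓛 W L w}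

/-- A witness that the polar space embeds in a projective space `ℙ(F, V)`. -/
structure EmbeddingWitness (𝓛 : Set (Set S)) where
  F : Type
  [iF : DivisionRing F]
  V : Type
  [iV : AddCommGroup V]
  [iM : Module F V]
  f : S → Projectivization F V
  inj : Function.Injective f
  spanning : ∀ T : Submodule F V, (∀ s : S, Projectivization.submodule (f s) ≤ T) → T = ⊤
  lines2dim : ∀ l ∈ 𝓛, ∃ U : Submodule F V, Module.finrank F ↥U = 2 ∧
    f '' l = {p | ∃ v : V, ∃ hv : v ≠ 0, v ∈ U ∧ p = Projectivization.mk F v hv}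

/-- An embeddable polar space. -/
def Embeddable (𝓛 : Set (Set S)) : Prop := Nonempty (EmbeddingWitness 𝓛)


/-!
If `b = N^∞` were not collinear with `a = M^∞`, the one-or-all axiom would give a point `c ≠ a`
of `M̄` collinear with `b`. As `M̄` meets `W` only in `a`, the point `c` lies on `M`, and the line
`bc` is an affine line through a point of `M` parallel to `N`, contradicting `M ~ N`.
-/

theorem Collin.symm {𝓛 : Set (Set S)} {a b : S} (h : Collin 𝓛 a b) : Collin 𝓛 b a := by
  rcases h with rfl | ⟨l, hl, ha, hb⟩
  · exact Or.inl rfl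
  · exact Or.inr ⟨l, hl, hb, ha⟩

theorem OneOrAll.exists_collin {𝓛 : Set (Set S)} (h : OneOrAll 𝓛) {l : Set S} (hl : l ∈ 𝓛)
    {a : S} (ha : a ∈ l) (b : S) : ∃ c ∈ l, Collin 𝓛 b c := by
  by_cases hb : b ∈ l
  · exact ⟨b, hb, Or.inl rfl⟩
  rcases h l hl b hb with ⟨c, ⟨hc, hbc⟩, -⟩ | hall
  · exact ⟨c, hc, hbc⟩
  · exact ⟨a, ha, hall a ha⟩

theorem IsSubspace.eq_of_mem_of_not_subset {𝓛 : Set (Set S)} {W : Set S} (hW : IsSubspace 𝓛 W)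
    {l : Set S} (hl : l ∈ 𝓛) (hlW : ¬ l ⊆ W) {a c : S} (ha : a ∈ l ∩ W) (hc : c ∈ l ∩ W) :
    a = c := by
  by_contra hac
  exact hlW (hW l hl ⟨a, ha, c, hc, hac⟩)

theorem AtInfinity.parallel_self {𝓛 : Set (Set S)} {W K : Set S} {a : S}
    (h : AtInfinity 𝓛 W K a) : Parallel 𝓛 W K K := by
  obtain ⟨k, hk, hkW, rfl, hak, haW⟩ := h
  exact ⟨k, hk, k, hk, hkW, hkW, rfl, rfl, a, ⟨hak, hak⟩, haW⟩

theorem EquivCls.tilde {𝓛 : Set (Set S)} {W M N : Set S} (h : EquivCls 𝓛 W M N)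
    (hM : IsAffineLine 𝓛 W M) (hN : IsAffineLine 𝓛 W N) {a b : S}
    (ha : AtInfinity 𝓛 W M a) (hb : AtInfinity 𝓛 W N b) : Tilde 𝓛 W M N :=
  (h M N hM hN ha.parallel_self hb.parallel_self).1

theorem collin_atInfinity_of_tilde {𝓛 : Set (Set S)} (hone : OneOrAll 𝓛) {W : Set S}
    (hW : IsSubspace 𝓛 W) {M N : Set S} (htilde : Tilde 𝓛 W M N) {a b : S}
    (ha : AtInfinity 𝓛 W M a) (hb : AtInfinity 𝓛 W N b) : Collin 𝓛 a b := by
  obtain ⟨m, hm, hmW, rfl, ham, haW⟩ := ha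
  obtain ⟨n, hn, hnW, rfl, hbn, hbW⟩ := hb
  by_contra hab
  obtain ⟨c, hcm, hbc⟩ := hone.exists_collin hm ham b
  have hca : c ≠ a := by
    rintro rfl
    exact hab hbc.symm
  have hcW : c ∉ W := fun hcW => hca (hW.eq_of_mem_of_not_subset hm hmW ⟨hcm, hcW⟩ ⟨ham, haW⟩)
  obtain ⟨l, hl, hbl, hcl⟩ : ∃ l ∈ 𝓛, b ∈ l ∧ c ∈ l := by
    refine hbc.resolve_left ?_
    rintro rfl
    exact hcW hbW
  have hlW : ¬ l ⊆ W := fun h => hcW (h hcl)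
  exact htilde c ⟨hcm, hcW⟩ (l \ W) ⟨l, hl, hlW, rfl, b, hbl, hbW⟩ ⟨hcl, hcW⟩
    ⟨l, hl, n, hn, hlW, hnW, rfl, rfl, b, ⟨hbl, hbn⟩, hbW⟩

theorem statement_12_general (𝓛 : Set (Set S)) (hpolar : IsPolarSpace 𝓛)
    (W : Set S) (hsub : IsSubspace 𝓛 W)
    (M N : Set S) (hM : IsAffineLine 𝓛 W M) (hN : IsAffineLine 𝓛 W N)
    (heq : EquivCls 𝓛 W M N) :
    ∀ a b : S, AtInfinity 𝓛 W M a → AtInfinity 𝓛 W N b → Collin 𝓛 a b := by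
  intro a b ha hb
  exact collin_atInfinity_of_tilde hpolar.2 hsub (heq.tilde hM hN ha hb) ha hb

theorem statement_12 (𝓛 : Set (Set S)) (hpolar : IsPolarSpace 𝓛) (hthick : Thick 𝓛)
    (hnd : Nondegenerate 𝓛) (hrank : RankAtLeast 𝓛 3)
    (W : Set S) (hsub : IsSubspace 𝓛 W) (hproper : W ≠ Set.univ)
    (hhyp : ∃ H : Set S, IsHyperplane 𝓛 H ∧ W ⊆ H)
    (hnothyp : ¬ IsHyperplane 𝓛 W)
    (M N : Set S) (hM : IsAffineLine 𝓛 W M) (hN : IsAffineLine 𝓛 W N)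
    (hnpar : ¬ Parallel 𝓛 W M N) (heq : EquivCls 𝓛 W M N) :
    ∀ a b : S, AtInfinity 𝓛 W M a → AtInfinity 𝓛 W N b → Collin 𝓛 a b :=
  statement_12_general 𝓛 hpolar W hsub M N hM hN heq

end PolarComp
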